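/- The map sending a composition (a_1, ..., a_{2m+1}) of n, in which every even-indexed part equals 1, to the composition (a_1 + a_2, a_3 + a_4, ..., a_{2m-1} + a_{2m}, a_{2m+1}) is a bijection between compositions of n with an odd number of parts whose even-indexed parts all equal 1, and compositions of n whose parts are all ≥ 2 except possibly the last part. -/

import Mathlib

/-!
Splitting every non-last part `a` of a composition into `(a - 1, 1)` undoes `pairSum`:
it turns a composition whose non-last parts are `≥ 2` into one of odd length whose
even-indexed parts are `1`, and summing adjacent pairs recovers the original.
-/

/-- Sum adjacent pairs of parts: `(a₁, a₂, a₃, a₄, ..., a_{2m+1}) ↦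
(a₁ + a₂, a₃ + a₄, ..., a_{2m-1} + a_{2m}, a_{2m+1})`. -/
def pairSum : List ℕ → List ℕ
  | [] => []
  | [a] => [a]
  | a :: b :: rest => (a + b) :: pairSum rest

def unpairSum : List ℕ → List ℕ
  | [] => []
  | [a] => [a]
  | a :: b :: rest => (a - 1) :: 1 :: unpairSum (b :: rest)

/-- Indices are 0-based, so `l[2 * i + 1]` is the `(2i+2)`-th part. -/
def EvenPartsEqOne (l : List ℕ) : Prop :=
  ∀ i : ℕ, (hi : 2 * i + 1 < l.length) → l[2 * i + 1] = 1

def PartsGeTwoExceptLast (l : List ℕ) : Prop :=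
  ∀ i : ℕ, i + 1 < l.length → (hi : i < l.length) → 2 ≤ l[i]

lemma evenPartsEqOne_cons_cons {a b : ℕ} {l : List ℕ} :
    EvenPartsEqOne (a :: b :: l) ↔ b = 1 ∧ EvenPartsEqOne l := by
  refine ⟨fun h => ⟨h 0 (by simp), fun i hi => h (i + 1) (by simp; omega)⟩, ?_⟩
  rintro ⟨rfl, h⟩ (_ | i) hi
  · rfl
  · exact h i (by simp at hi; omega)

lemma partsGeTwoExceptLast_cons_cons {a b : ℕ} {l : List ℕ} :
    PartsGeTwoExceptLast (a :: b :: l) ↔ 2 ≤ a ∧ PartsGeTwoExceptLast (b :: l) := by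
  refine ⟨fun h => ⟨h 0 (by simp) (by simp), fun i hi hi' => h (i + 1) (by simp at hi ⊢; omega)
    (by simp at hi' ⊢; omega)⟩, ?_⟩
  rintro ⟨ha, h⟩ (_ | i) hi hi'
  · exact ha
  · exact h i (by simp at hi ⊢; omega) (by simp at hi' ⊢; omega)

lemma pairSum_sum (l : List ℕ) : (pairSum l).sum = l.sum := by
  induction l using pairSum.induct <;> simp [pairSum, *]; omega

lemma pairSum_pos {l : List ℕ} (h : ∀ x ∈ l, 0 < x) : ∀ x ∈ pairSum l, 0 < x := by
  induction l using pairSum.induct with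
  | case1 => simp [pairSum]
  | case2 a => simpa [pairSum] using h
  | case3 a b rest ih =>
    simp only [List.mem_cons, forall_eq_or_imp, pairSum] at h ⊢
    exact ⟨by omega, ih h.2.2⟩

lemma partsGeTwoExceptLast_pairSum {l : List ℕ} (h : ∀ x ∈ l, 0 < x) :
    PartsGeTwoExceptLast (pairSum l) := by
  induction l using pairSum.induct with
  | case1 | case2 => intro i hi; simp [pairSum] at hi
  | case3 a b rest ih =>
    simp only [List.mem_cons, forall_eq_or_imp] at h
    have hrest := ih h.2.2
    rintro (_ | i) hi hi'
    · simp only [pairSum, List.getElem_cons_zero]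
      omega
    · simp only [pairSum, List.length_cons, List.getElem_cons_succ] at hi hi' ⊢
      exact hrest i (by omega) (by omega)

lemma unpairSum_cons_of_ne_nil (a : ℕ) {l : List ℕ} (hl : l ≠ []) :
    unpairSum (a :: l) = (a - 1) :: 1 :: unpairSum l := by
  obtain ⟨b, rest, rfl⟩ := List.exists_cons_of_ne_nil hl
  rfl

lemma pairSum_unpairSum {l : List ℕ} (h : ∀ x ∈ l, 0 < x) : pairSum (unpairSum l) = l := by
  induction l using unpairSum.induct with
  | case1 => rfl
  | case2 => rfl
  | case3 a b rest ih =>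
    simp only [List.mem_cons, forall_eq_or_imp] at h
    simp only [unpairSum, pairSum, ih (by simpa using h.2)]
    congr 1
    omega

lemma unpairSum_pairSum {l : List ℕ} (hodd : Odd l.length) (hone : EvenPartsEqOne l) :
    unpairSum (pairSum l) = l := by
  induction l using pairSum.induct with
  | case1 => simp at hodd
  | case2 => rfl
  | case3 a b rest ih =>
    obtain ⟨rfl, hrest⟩ := evenPartsEqOne_cons_cons.mp hone
    have hodd' : Odd rest.length := by simpa [parity_simps] using hodd
    have hne : pairSum rest ≠ [] := by
      rintro h
      rw [← ih hodd' hrest, h] at hodd'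
      simp [unpairSum] at hodd'
    rw [pairSum, unpairSum_cons_of_ne_nil _ hne, ih hodd' hrest, Nat.add_sub_cancel]

lemma unpairSum_sum {l : List ℕ} (h : ∀ x ∈ l, 0 < x) : (unpairSum l).sum = l.sum := by
  rw [← pairSum_sum, pairSum_unpairSum h]

lemma unpairSum_pos {l : List ℕ} (h : ∀ x ∈ l, 0 < x) (h2 : PartsGeTwoExceptLast l) :
    ∀ x ∈ unpairSum l, 0 < x := by
  induction l using unpairSum.induct with
  | case1 => simp [unpairSum]
  | case2 => simpa [unpairSum] using h
  | case3 a b rest ih =>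
    obtain ⟨ha, hrest⟩ := partsGeTwoExceptLast_cons_cons.mp h2
    simp only [unpairSum, List.mem_cons, forall_eq_or_imp]
    exact ⟨by omega, Nat.one_pos, ih (fun x hx => h x (List.mem_cons_of_mem a hx)) hrest⟩

lemma odd_length_unpairSum {l : List ℕ} (hl : l ≠ []) : Odd (unpairSum l).length := by
  induction l using unpairSum.induct with
  | case1 => exact absurd rfl hl
  | case2 => simp [unpairSum]
  | case3 a b rest ih =>
    simpa [unpairSum, parity_simps] using ih (List.cons_ne_nil b rest)

lemma evenPartsEqOne_unpairSum (l : List ℕ) : EvenPartsEqOne (unpairSum l) := by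
  induction l using unpairSum.induct with
  | case1 | case2 => intro i hi; simp [unpairSum] at hi
  | case3 a b rest ih => exact evenPartsEqOne_cons_cons.mpr ⟨rfl, ih⟩

/-- Summing adjacent pairs is a bijection between compositions of `n` with an
odd number of parts whose even-indexed (1-based) parts all equal `1`, and
compositions of `n` whose parts are all `≥ 2` except possibly the last. -/
theorem pairSum_bijection (n : ℕ) (hn : 1 ≤ n) :
    Set.BijOn pairSum
      {l : List ℕ | l.sum = n ∧ (∀ x ∈ l, 0 < x) ∧ Odd l.length ∧
        ∀ i : ℕ, (hi : 2 * i + 1 < l.length) → l[2 * i + 1] = 1}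
      {l : List ℕ | l.sum = n ∧ (∀ x ∈ l, 0 < x) ∧
        ∀ i : ℕ, i + 1 < l.length → (hi : i < l.length) → 2 ≤ l[i]} := by
  refine Set.InvOn.bijOn (f' := unpairSum) ⟨?_, ?_⟩ ?_ ?_
  · rintro l ⟨-, -, hodd, hone⟩
    exact unpairSum_pairSum hodd hone
  · rintro l ⟨-, hpos, -⟩
    exact pairSum_unpairSum hpos
  · rintro l ⟨hsum, hpos, -, -⟩
    exact ⟨(pairSum_sum l).trans hsum, pairSum_pos hpos, partsGeTwoExceptLast_pairSum hpos⟩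
  · rintro l ⟨hsum, hpos, h2⟩
    have hne : l ≠ [] := by
      rintro rfl
      simp at hsum
      omega
    exact ⟨(unpairSum_sum hpos).trans hsum, unpairSum_pos hpos h2, odd_length_unpairSum hne,
      evenPartsEqOne_unpairSum l⟩
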